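/- arXiv:2509.09335 — 4 statements merged into one kernel-verified Lean document; each statement's English description precedes it below -/
import Mathlib

section
/- For all vectors u, v in ℝ^d and r ≥ 1, one has (|u|^{r-1}u - |v|^{r-1}v) · (u - v) ≥ (1/2)|u|^{r-1}|u - v|^2 + (1/2)|v|^{r-1}|u - v|^2. -/
/-! The inner product splits as
`⟪a • u - b • v, u - v⟫ = (a + b)/2 ‖u - v‖² + (a - b)(‖u‖² - ‖v‖²)/2`,
and with `a = ‖u‖^(r-1)`, `b = ‖v‖^(r-1)` the second term is nonnegative because
`t ↦ t^(r-1)` and `t ↦ t²` are both monotone on `[0, ∞)`. -/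

lemma real_inner_smul_sub_smul_sub_eq {E : Type*} [NormedAddCommGroup E] [InnerProductSpace ℝ E]
    (a b : ℝ) (u v : E) :
    inner ℝ (a • u - b • v) (u - v) =
      (a + b) / 2 * ‖u - v‖ ^ 2 + (a - b) * (‖u‖ ^ 2 - ‖v‖ ^ 2) / 2 := by
  rw [norm_sub_sq_real]
  simp only [inner_sub_left, inner_sub_right, real_inner_smul_left, real_inner_self_eq_norm_sq,
    real_inner_comm v u]
  ring

lemma rpow_sub_rpow_mul_sq_sub_sq_nonneg {p x y : ℝ} (hp : 0 ≤ p) (hx : 0 ≤ x) (hy : 0 ≤ y) :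
    0 ≤ (x ^ p - y ^ p) * (x ^ 2 - y ^ 2) := by
  rcases le_total x y with hxy | hyx
  · exact mul_nonneg_of_nonpos_of_nonpos
      (sub_nonpos.2 (Real.rpow_le_rpow hx hxy hp)) (sub_nonpos.2 (pow_le_pow_left₀ hx hxy 2))
  · exact mul_nonneg
      (sub_nonneg.2 (Real.rpow_le_rpow hy hyx hp)) (sub_nonneg.2 (pow_le_pow_left₀ hy hyx 2))

theorem stmt0 (d : ℕ) (r : ℝ) (hr : 1 ≤ r) (u v : EuclideanSpace ℝ (Fin d)) :
    (inner ℝ ((‖u‖ ^ (r - 1)) • u - (‖v‖ ^ (r - 1)) • v) (u - v) : ℝ) ≥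
      (1 / 2) * ‖u‖ ^ (r - 1) * ‖u - v‖ ^ 2 + (1 / 2) * ‖v‖ ^ (r - 1) * ‖u - v‖ ^ 2 := by
  have hmono := rpow_sub_rpow_mul_sq_sub_sq_nonneg (sub_nonneg.2 hr) (norm_nonneg u) (norm_nonneg v)
  rw [real_inner_smul_sub_smul_sub_eq]
  linarith
end

section
/- For all vectors u, v in ℝ^d and r ≥ 1, one has (|u|^{r-1}u - |v|^{r-1}v) · (u - v) ≥ 2^{-(r-1)} |u - v|^{r+1}. -/
/-!
With `s = r - 1`, `a = ‖u‖`, `b = ‖v‖`, `t = ‖u - v‖`, the left-hand side equals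
`(a^s - b^s)(a² - b²)/2 + (a^s + b^s)/2 · t²`, whose first term is nonnegative.
If `2^(-s) t^s ≤ (a^s + b^s)/2` this already dominates `2^(-s) t^(s+2)`. Otherwise the deficit
`t² (2^(-s) t^s - (a^s + b^s)/2)` only grows when `t` is replaced by `a + b ≥ t`, and at `t = a + b`
the inequality reads `2^(-s) (a + b)^(s+1) ≤ a^(s+1) + b^(s+1)`, the power mean inequality.
-/

open Real

namespace Real

theorem rpow_add_le_mul_rpow_add_rpow {a b p : ℝ} (ha : 0 ≤ a) (hb : 0 ≤ b) (hp : 1 ≤ p) :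
    (a + b) ^ p ≤ 2 ^ (p - 1) * (a ^ p + b ^ p) := by
  lift a to NNReal using ha
  lift b to NNReal using hb
  exact_mod_cast NNReal.rpow_add_le_mul_rpow_add_rpow a b hp

end Real

theorem rpow_sub_rpow_mul_sq_sub_sq_nonneg_s1 {a b s : ℝ} (ha : 0 ≤ a) (hb : 0 ≤ b) (hs : 0 ≤ s) :
    0 ≤ (a ^ s - b ^ s) * (a ^ 2 - b ^ 2) := by
  rcases le_total a b with hab | hab
  · exact mul_nonneg_of_nonpos_of_nonpos
      (sub_nonpos.2 (rpow_le_rpow ha hab hs)) (sub_nonpos.2 (pow_le_pow_left₀ ha hab 2))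
  · exact mul_nonneg
      (sub_nonneg.2 (rpow_le_rpow hb hab hs)) (sub_nonneg.2 (pow_le_pow_left₀ hb hab 2))

theorem two_rpow_neg_mul_rpow_le {a b s : ℝ} (ha : 0 ≤ a) (hb : 0 ≤ b) (hs : 0 ≤ s) :
    2 ^ (-s) * (a + b) ^ s * (a + b) ≤ a ^ s * a + b ^ s * b := by
  have hmean := rpow_add_le_mul_rpow_add_rpow ha hb (p := s + 1) (by linarith)
  rw [add_sub_cancel_right, rpow_add_one' ha (by linarith), rpow_add_one' hb (by linarith),
    rpow_add_one' (add_nonneg ha hb) (by linarith)] at hmean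
  calc 2 ^ (-s) * (a + b) ^ s * (a + b) ≤ 2 ^ (-s) * (2 ^ s * (a ^ s * a + b ^ s * b)) := by
        rw [mul_assoc]; gcongr
    _ = a ^ s * a + b ^ s * b := by
        rw [← mul_assoc, ← rpow_add two_pos, neg_add_cancel, rpow_zero, one_mul]

theorem two_rpow_neg_mul_rpow_mul_sq_le {a b s t : ℝ} (ha : 0 ≤ a) (hb : 0 ≤ b) (hs : 0 ≤ s)
    (ht : 0 ≤ t) (htab : t ≤ a + b) :
    2 ^ (-s) * (t ^ s * t ^ 2) ≤
      (a ^ s - b ^ s) * (a ^ 2 - b ^ 2) / 2 + (a ^ s + b ^ s) / 2 * t ^ 2 := by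
  set C : ℝ := 2 ^ (-s)
  set m : ℝ := (a ^ s + b ^ s) / 2
  set K : ℝ := (a ^ s - b ^ s) * (a ^ 2 - b ^ 2) / 2
  have hK : 0 ≤ K := div_nonneg (rpow_sub_rpow_mul_sq_sub_sq_nonneg_s1 ha hb hs) zero_le_two
  have hC : 0 ≤ C := (rpow_pos_of_pos two_pos _).le
  rcases le_or_gt (C * t ^ s) m with hsmall | hlarge
  · nlinarith [sq_nonneg t]
  have hts : C * t ^ s ≤ C * (a + b) ^ s := by gcongr
  have htsq : t ^ 2 ≤ (a + b) ^ 2 := pow_le_pow_left₀ ht htab 2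
  have hend : C * (a + b) ^ s * (a + b) ^ 2 - m * (a + b) ^ 2 ≤ K := by
    have hid : K + m * (a + b) ^ 2 = (a ^ s * a + b ^ s * b) * (a + b) := by ring
    nlinarith [two_rpow_neg_mul_rpow_le ha hb hs, add_nonneg ha hb]
  calc C * (t ^ s * t ^ 2) = t ^ 2 * (C * t ^ s - m) + m * t ^ 2 := by ring
    _ ≤ (a + b) ^ 2 * (C * t ^ s - m) + m * t ^ 2 := by
        have : 0 ≤ C * t ^ s - m := (sub_pos.2 hlarge).le
        gcongr
    _ ≤ (a + b) ^ 2 * (C * (a + b) ^ s - m) + m * t ^ 2 := by gcongr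
    _ ≤ K + m * t ^ 2 := by linarith

section InnerProductSpace

variable {F : Type*} [NormedAddCommGroup F] [InnerProductSpace ℝ F]

theorem real_inner_smul_sub_smul_sub (α β : ℝ) (u v : F) :
    inner ℝ (α • u - β • v) (u - v) =
      (α - β) * (‖u‖ ^ 2 - ‖v‖ ^ 2) / 2 + (α + β) / 2 * ‖u - v‖ ^ 2 := by
  rw [norm_sub_sq_real]
  simp only [inner_sub_left, inner_sub_right, real_inner_smul_left, real_inner_self_eq_norm_sq,
    real_inner_comm u v]
  ring

theorem two_rpow_mul_norm_sub_rpow_le_inner {r : ℝ} (hr : 1 ≤ r) (u v : F) :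
    2 ^ (-(r - 1)) * ‖u - v‖ ^ (r + 1) ≤
      inner ℝ (‖u‖ ^ (r - 1) • u - ‖v‖ ^ (r - 1) • v) (u - v) := by
  have hpow : ‖u - v‖ ^ (r + 1) = ‖u - v‖ ^ (r - 1) * ‖u - v‖ ^ 2 := by
    rw [← rpow_two, ← rpow_add' (norm_nonneg _) (by linarith), sub_add_eq_add_sub, add_sub_assoc]
    norm_num
  rw [hpow, real_inner_smul_sub_smul_sub]
  exact two_rpow_neg_mul_rpow_mul_sq_le (norm_nonneg u) (norm_nonneg v) (by linarith)
    (norm_nonneg _) (norm_sub_le u v)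

end InnerProductSpace

theorem stmt1 (d : ℕ) (r : ℝ) (hr : 1 ≤ r) (u v : EuclideanSpace ℝ (Fin d)) :
    (inner ℝ ((‖u‖ ^ (r - 1)) • u - (‖v‖ ^ (r - 1)) • v) (u - v) : ℝ) ≥
      (2 : ℝ) ^ (-(r - 1)) * ‖u - v‖ ^ (r + 1) :=
  two_rpow_mul_norm_sub_rpow_le_inner hr u v
end

section
/- Let X be a real Banach space and h : X → ℝ a locally Lipschitz function. Then h is strongly convex with constant ϑ > 0 (i.e., h(λu + (1-λ)v) ≤ λh(u) + (1-λ)h(v) − ϑλ(1-λ)‖u-v‖² for all u, v ∈ X and λ ∈ [0,1]) if and only if the Clarke subdifferential ∂h is strongly monotone with constant 2ϑ (i.e., ⟨ξ − η, u − v⟩ ≥ 2ϑ‖u-v‖² for all u, v ∈ X, ξ ∈ ∂h(u), η ∈ ∂h(v)). -/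
open Filter

/-- Clarke generalized directional derivative of `h` at `x` in direction `v`. -/
noncomputable def clarkeDeriv {X : Type*} [NormedAddCommGroup X] [NormedSpace ℝ X]
    (h : X → ℝ) (x v : X) : ℝ :=
  limsup (fun p : X × ℝ => (h (p.1 + p.2 • v) - h p.1) / p.2)
    ((nhds x) ×ˢ (nhdsWithin 0 (Set.Ioi 0)))

/-- Clarke subdifferential (generalized gradient) of `h` at `x`. -/
def clarkeSubdiff {X : Type*} [NormedAddCommGroup X] [NormedSpace ℝ X]
    (h : X → ℝ) (x : X) : Set (X →L[ℝ] ℝ) :=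
  {ζ | ∀ v : X, ζ v ≤ clarkeDeriv h x v}

open Set Topology

/-!
Strong convexity bounds every difference quotient, hence the Clarke derivative:
`h⁰(x; d) ≤ h (x + d) - h x - ϑ‖d‖²`; applied at `u` and at `v` this gives strong monotonicity.

Conversely, by Hahn–Banach each value `h⁰(x; d)` is attained by an element of `∂h x`, so strong
monotonicity reads `h⁰(x; y - x) + h⁰(y; x - y) ≤ -2ϑ‖x - y‖²`. On a line `t ↦ v + t • d` this
makes `g t = h⁰(v + t • d; d) - 2ϑ‖d‖² t` monotone; `g τ` bounds the right Dini derivative of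
`χ t = h (v + t • d) - ϑ‖d‖² t²` at `τ` from above and `g s`, for `s < τ`, bounds its left Dini
derivative at `τ` from below. A Dini mean value argument then makes the slopes of `χ` increase,
so `χ` is convex, which is strong convexity of `h` along the line.
-/

section ClarkeDeriv

variable {X : Type*} [NormedAddCommGroup X] [NormedSpace ℝ X]

noncomputable def clarkeQuotient (h : X → ℝ) (d : X) (p : X × ℝ) : ℝ :=
  (h (p.1 + p.2 • d) - h p.1) / p.2

variable {h : X → ℝ}

theorem clarkeDeriv_eq_limsup (x d : X) :
    clarkeDeriv h x d = limsup (clarkeQuotient h d) (𝓝 x ×ˢ 𝓝[>] 0) :=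
  rfl

@[simp]
theorem clarkeDeriv_zero_right (x : X) : clarkeDeriv h x 0 = 0 := by
  simp [clarkeDeriv]

theorem tendsto_add_smul_nhds_prod_nhdsGT (x d : X) :
    Tendsto (fun p : X × ℝ => p.1 + p.2 • d) (𝓝 x ×ˢ 𝓝[>] 0) (𝓝 x) := by
  simpa using tendsto_fst.add
    (((tendsto_snd (f := 𝓝 x) (g := 𝓝[>] (0 : ℝ))).mono_right nhdsWithin_le_nhds).smul_const d)

theorem LocallyLipschitz.exists_eventually_abs_clarkeQuotient_le (hh : LocallyLipschitz h)
    (x : X) : ∃ K : ℝ, ∀ d, ∀ᶠ p in 𝓝 x ×ˢ 𝓝[>] 0, |clarkeQuotient h d p| ≤ K * ‖d‖ := by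
  obtain ⟨K, U, hU, hK⟩ := hh x
  refine ⟨K, fun d => ?_⟩
  filter_upwards [tendsto_fst hU, tendsto_add_smul_nhds_prod_nhdsGT x d hU,
    tendsto_snd self_mem_nhdsWithin] with p hp hpd (ht : 0 < p.2)
  have hlip := hK.dist_le_mul _ hpd _ hp
  rw [Real.dist_eq, dist_eq_norm, add_sub_cancel_left, norm_smul, Real.norm_of_nonneg ht.le]
    at hlip
  rw [clarkeQuotient, abs_div, abs_of_pos ht, div_le_iff₀ ht]
  linarith

theorem LocallyLipschitz.isBoundedUnder_clarkeQuotient_comp (hh : LocallyLipschitz h)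
    {α : Type*} {l : Filter α} {x : X} {m : α → X × ℝ} (hm : Tendsto m l (𝓝 x ×ˢ 𝓝[>] 0))
    (d : X) :
    IsBoundedUnder (· ≤ ·) l (clarkeQuotient h d ∘ m) ∧
      IsBoundedUnder (· ≥ ·) l (clarkeQuotient h d ∘ m) := by
  obtain ⟨K, hK⟩ := hh.exists_eventually_abs_clarkeQuotient_le x
  exact isBoundedUnder_le_abs.1 (hm.isBoundedUnder_comp ⟨K * ‖d‖, hK d⟩)

theorem LocallyLipschitz.limsup_clarkeQuotient_comp_le (hh : LocallyLipschitz h)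
    {α : Type*} {l : Filter α} [l.NeBot] {x : X} {m : α → X × ℝ}
    (hm : Tendsto m l (𝓝 x ×ˢ 𝓝[>] 0)) (d : X) :
    limsup (clarkeQuotient h d ∘ m) l ≤ clarkeDeriv h x d :=
  hm.limsup_comp_le_limsup (hh.isBoundedUnder_clarkeQuotient_comp hm d).2.isCoboundedUnder_le
    (hh.isBoundedUnder_clarkeQuotient_comp tendsto_id d).1

theorem LocallyLipschitz.exists_clarkeDeriv_le_mul_norm (hh : LocallyLipschitz h) (x : X) :
    ∃ K : ℝ, ∀ d, clarkeDeriv h x d ≤ K * ‖d‖ := by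
  obtain ⟨K, hK⟩ := hh.exists_eventually_abs_clarkeQuotient_le x
  exact ⟨K, fun d => limsup_le_of_le
    (hh.isBoundedUnder_clarkeQuotient_comp tendsto_id d).2.isCoboundedUnder_le
    ((hK d).mono fun p hp => (abs_le.1 hp).2)⟩

theorem LocallyLipschitz.clarkeDeriv_add_le (hh : LocallyLipschitz h) (x a b : X) :
    clarkeDeriv h x (a + b) ≤ clarkeDeriv h x a + clarkeDeriv h x b := by
  set F := 𝓝 x ×ˢ 𝓝[>] (0 : ℝ)
  let m : X × ℝ → X × ℝ := fun p => (p.1 + p.2 • b, p.2)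
  have hm : Tendsto m F F := (tendsto_add_smul_nhds_prod_nhdsGT x b).prodMk tendsto_snd
  have hsplit : clarkeQuotient h (a + b) = clarkeQuotient h a ∘ m + clarkeQuotient h b := by
    funext p
    simp only [clarkeQuotient, Pi.add_apply, Function.comp_apply, m]
    rw [← add_div, sub_add_sub_cancel, smul_add, add_right_comm, add_assoc]
  obtain ⟨hma, hma'⟩ := hh.isBoundedUnder_clarkeQuotient_comp hm a
  obtain ⟨hb, hb'⟩ := hh.isBoundedUnder_clarkeQuotient_comp tendsto_id b
  calc clarkeDeriv h x (a + b)
      = limsup (clarkeQuotient h a ∘ m + clarkeQuotient h b) F := by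
        rw [clarkeDeriv_eq_limsup, hsplit]
    _ ≤ limsup (clarkeQuotient h a ∘ m) F + limsup (clarkeQuotient h b) F :=
        limsup_add_le hma' hma hb'.isCoboundedUnder_le hb
    _ ≤ clarkeDeriv h x a + clarkeDeriv h x b :=
        add_le_add_left (hh.limsup_clarkeQuotient_comp_le hm a) _

theorem LocallyLipschitz.clarkeDeriv_add_neg_nonneg (hh : LocallyLipschitz h) (x d : X) :
    0 ≤ clarkeDeriv h x d + clarkeDeriv h x (-d) := by
  simpa using hh.clarkeDeriv_add_le x d (-d)

theorem LocallyLipschitz.clarkeDeriv_smul_le (hh : LocallyLipschitz h) (x d : X) {c : ℝ}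
    (hc : 0 < c) : clarkeDeriv h x (c • d) ≤ c * clarkeDeriv h x d := by
  set F := 𝓝 x ×ˢ 𝓝[>] (0 : ℝ)
  let m : X × ℝ → X × ℝ := fun p => (p.1, c * p.2)
  have hmul : Tendsto (c * ·) (𝓝[>] (0 : ℝ)) (𝓝[>] 0) := by
    simpa only [comap_mulLeft_nhdsGT_zero hc] using tendsto_comap (f := (c * ·)) (x := 𝓝[>] 0)
  have hm : Tendsto m F F := tendsto_fst.prodMk (hmul.comp tendsto_snd)
  have hscale : clarkeQuotient h (c • d) = (c * ·) ∘ (clarkeQuotient h d ∘ m) := by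
    funext p
    simp only [clarkeQuotient, Function.comp_apply, m, smul_smul, mul_comm p.2 c]
    rw [mul_div_assoc', mul_div_mul_left _ _ hc.ne']
  obtain ⟨hup, hlow⟩ := hh.isBoundedUnder_clarkeQuotient_comp hm d
  calc clarkeDeriv h x (c • d) = limsup ((c * ·) ∘ (clarkeQuotient h d ∘ m)) F := by
        rw [clarkeDeriv_eq_limsup, hscale]
    _ = c * limsup (clarkeQuotient h d ∘ m) F :=
        ((monotone_mul_left_of_nonneg hc.le).map_limsup_of_continuousAt _
          (continuous_const_mul c).continuousAt hup hlow.isCoboundedUnder_le).symm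
    _ ≤ c * clarkeDeriv h x d :=
        mul_le_mul_of_nonneg_left (hh.limsup_clarkeQuotient_comp_le hm d) hc.le

theorem LocallyLipschitz.clarkeDeriv_smul (hh : LocallyLipschitz h) (x d : X) {c : ℝ}
    (hc : 0 < c) : clarkeDeriv h x (c • d) = c * clarkeDeriv h x d := by
  refine (hh.clarkeDeriv_smul_le x d hc).antisymm ?_
  have := hh.clarkeDeriv_smul_le x (c • d) (inv_pos.2 hc)
  rw [inv_smul_smul₀ hc.ne'] at this
  rwa [← le_div_iff₀' hc, div_eq_inv_mul]

theorem LocallyLipschitz.mul_clarkeDeriv_le_clarkeDeriv_smul (hh : LocallyLipschitz h)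
    (x d : X) (c : ℝ) : c * clarkeDeriv h x d ≤ clarkeDeriv h x (c • d) := by
  rcases lt_trichotomy c 0 with hc | rfl | hc
  · rw [← neg_neg c, neg_smul, ← smul_neg, hh.clarkeDeriv_smul x _ (neg_pos.2 hc)]
    nlinarith [hh.clarkeDeriv_add_neg_nonneg x d]
  · simp
  · rw [hh.clarkeDeriv_smul x d hc]

theorem LocallyLipschitz.exists_mem_clarkeSubdiff_apply_eq (hh : LocallyLipschitz h) (x : X)
    {d : X} (hd : d ≠ 0) : ∃ ξ ∈ clarkeSubdiff h x, ξ d = clarkeDeriv h x d := by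
  let f := LinearPMap.mkSpanSingleton (K := ℝ) (L := ℝ) (σ := RingHom.id ℝ) d
    (clarkeDeriv h x d) hd
  have hf : ∀ z : f.domain, f z ≤ clarkeDeriv h x z := by
    rintro ⟨z, hz⟩
    obtain ⟨c, rfl⟩ := Submodule.mem_span_singleton.1 hz
    rw [LinearPMap.mkSpanSingleton'_apply, RingHom.id_apply, smul_eq_mul]
    exact hh.mul_clarkeDeriv_le_clarkeDeriv_smul x d c
  obtain ⟨g, hgf, hg⟩ := exists_extension_of_le_sublinear f (clarkeDeriv h x)
    (fun c hc v => hh.clarkeDeriv_smul x v hc) (hh.clarkeDeriv_add_le x) hf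
  obtain ⟨K, hK⟩ := hh.exists_clarkeDeriv_le_mul_norm x
  have hgK : ∀ v, ‖g v‖ ≤ K * ‖v‖ := by
    intro v
    have hneg := (hg (-v)).trans (hK (-v))
    rw [map_neg, norm_neg] at hneg
    exact abs_le.2 ⟨by linarith, (hg v).trans (hK v)⟩
  refine ⟨g.mkContinuous K hgK, hg, ?_⟩
  rw [LinearMap.mkContinuous_apply, hgf ⟨d, Submodule.mem_span_singleton_self d⟩]
  exact LinearPMap.mkSpanSingleton_apply ℝ ℝ hd _

theorem LocallyLipschitz.eventually_div_lt_of_clarkeDeriv_lt (hh : LocallyLipschitz h)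
    {x d : X} {ρ : ℝ} (hρ : clarkeDeriv h x d < ρ) :
    ∀ᶠ t in 𝓝[>] 0, (h (x + t • d) - h x) / t < ρ := by
  have hm : Tendsto (fun t : ℝ => (x, t)) (𝓝[>] 0) (𝓝 x ×ˢ 𝓝[>] 0) :=
    tendsto_const_nhds.prodMk tendsto_id
  exact hm.eventually (eventually_lt_of_limsup_lt hρ
    (hh.isBoundedUnder_clarkeQuotient_comp tendsto_id d).1)

end ClarkeDeriv

theorem sub_le_mul_of_eventually_div_lt {f : ℝ → ℝ} {a b M : ℝ} (hab : a ≤ b)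
    (hf : ContinuousOn f (Icc a b))
    (hM : ∀ τ ∈ Ico a b, ∀ ρ > M, ∀ᶠ t in 𝓝[>] 0, (f (τ + t) - f τ) / t < ρ) :
    f b - f a ≤ M * (b - a) := by
  have key := image_le_of_liminf_slope_right_le_deriv_boundary (B := fun y => f a + M * (y - a))
    (B' := fun _ => M) hf (by simp) (by fun_prop)
    (fun y _ => by
      simpa using (((hasDerivWithinAt_id y (Ici y)).sub_const a).const_mul M).const_add (f a))
    (fun τ hτ ρ hρ => ?_) (right_mem_Icc.2 hab)
  · linarith
  · have hτ0 := map_add_left_nhdsGT (c := τ) (a := (0 : ℝ))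
    rw [add_zero] at hτ0
    rw [← hτ0, frequently_map]
    refine (hM τ hτ ρ hρ).frequently.mono fun t ht => ?_
    rwa [slope_def_field, add_sub_cancel_left]

theorem mul_le_sub_of_eventually_div_lt {f : ℝ → ℝ} {a b m : ℝ} (hab : a ≤ b)
    (hf : ContinuousOn f (Icc a b))
    (hm : ∀ τ ∈ Ioc a b, ∀ ρ > -m, ∀ᶠ t in 𝓝[>] 0, (f (τ - t) - f τ) / t < ρ) :
    m * (b - a) ≤ f b - f a := by
  have key := sub_le_mul_of_eventually_div_lt (f := fun τ => f (-τ)) (M := -m) (neg_le_neg hab)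
    (hf.comp continuousOn_neg fun τ hτ => ⟨le_neg.1 hτ.2, neg_le.1 hτ.1⟩)
    (fun τ hτ ρ hρ => by
      simpa only [neg_add'] using hm (-τ) ⟨lt_neg.1 hτ.2, neg_le.1 hτ.1⟩ ρ hρ)
  simp only [neg_neg] at key
  linarith

theorem convexOn_univ_of_dini_bounds {f g : ℝ → ℝ} (hf : Continuous f) (hg : Monotone g)
    (hfwd : ∀ τ, ∀ ρ > g τ, ∀ᶠ t in 𝓝[>] 0, (f (τ + t) - f τ) / t < ρ)
    (hbwd : ∀ s τ, s < τ → ∀ ρ > -g s, ∀ᶠ t in 𝓝[>] 0, (f (τ - t) - f τ) / t < ρ) :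
    ConvexOn ℝ univ f := by
  refine convexOn_of_slope_mono_adjacent convex_univ fun {x y z} _ _ hxy hyz => ?_
  have hleft : f y - f x ≤ g y * (y - x) :=
    sub_le_mul_of_eventually_div_lt hxy.le hf.continuousOn fun τ hτ ρ hρ =>
      hfwd τ ρ ((hg hτ.2.le).trans_lt hρ)
  have hright : g y * (z - y) ≤ f z - f y :=
    mul_le_sub_of_eventually_div_lt hyz.le hf.continuousOn fun τ hτ => hbwd y τ hτ.1
  calc (f y - f x) / (y - x) ≤ g y := (div_le_iff₀ (sub_pos.2 hxy)).2 hleft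
    _ ≤ (f z - f y) / (z - y) := (le_div_iff₀ (sub_pos.2 hyz)).2 hright

section StrongConvexity

variable {X : Type*} [NormedAddCommGroup X] [NormedSpace ℝ X] {h : X → ℝ} {ϑ : ℝ}

def ClarkeSubdiffStronglyMonotone (h : X → ℝ) (m : ℝ) : Prop :=
  ∀ u v : X, ∀ ξ ∈ clarkeSubdiff h u, ∀ η ∈ clarkeSubdiff h v,
    ξ (u - v) - η (u - v) ≥ m * ‖u - v‖ ^ 2

theorem strongConvexOn_univ_two_mul_iff {f : X → ℝ} :
    StrongConvexOn univ (2 * ϑ) f ↔ ∀ u v : X, ∀ l : ℝ, l ∈ Icc (0 : ℝ) 1 →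
      f (l • u + (1 - l) • v) ≤ l * f u + (1 - l) * f v - ϑ * l * (1 - l) * ‖u - v‖ ^ 2 := by
  refine ⟨fun hf u v l hl => ?_, fun hf => ⟨convex_univ, fun u _ v _ a b ha hb hab => ?_⟩⟩
  · have := hf.2 (mem_univ u) (mem_univ v) hl.1 (sub_nonneg.2 hl.2) (add_sub_cancel l 1)
    simp only [smul_eq_mul] at this
    linarith
  · obtain rfl : b = 1 - a := by linarith
    have := hf u v a ⟨ha, by linarith⟩
    simp only [smul_eq_mul]
    linarith

theorem LocallyLipschitz.clarkeDeriv_le_of_strongConvexOn (hh : LocallyLipschitz h)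
    (hsc : StrongConvexOn univ (2 * ϑ) h) (x d : X) :
    clarkeDeriv h x d ≤ h (x + d) - h x - ϑ * ‖d‖ ^ 2 := by
  set F := 𝓝 x ×ˢ 𝓝[>] (0 : ℝ)
  let g : X × ℝ → ℝ := fun p => h (p.1 + d) - h p.1 - ϑ * (1 - p.2) * ‖d‖ ^ 2
  have hg : Tendsto g F (𝓝 (h (x + d) - h x - ϑ * ‖d‖ ^ 2)) := by
    have hcont : Continuous g := by
      have := hh.continuous
      fun_prop
    have hF : F ≤ 𝓝 (x, 0) :=
      (Filter.prod_mono le_rfl nhdsWithin_le_nhds).trans_eq nhds_prod_eq.symm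
    simpa [g] using (hcont.tendsto (x, 0)).mono_left hF
  have hle : ∀ᶠ p in F, clarkeQuotient h d p ≤ g p := by
    filter_upwards [tendsto_snd (Ioo_mem_nhdsGT one_pos)] with p ⟨ht0, ht1⟩
    have := (strongConvexOn_univ_two_mul_iff.1 hsc) (p.1 + d) p.1 p.2 ⟨ht0.le, ht1.le⟩
    rw [show p.2 • (p.1 + d) + (1 - p.2) • p.1 = p.1 + p.2 • d by module,
      add_sub_cancel_left] at this
    rw [clarkeQuotient, div_le_iff₀ ht0]
    linarith
  calc clarkeDeriv h x d ≤ limsup g F :=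
        limsup_le_limsup hle
          (hh.isBoundedUnder_clarkeQuotient_comp tendsto_id d).2.isCoboundedUnder_le
          hg.isBoundedUnder_le
    _ = h (x + d) - h x - ϑ * ‖d‖ ^ 2 := hg.limsup_eq

theorem LocallyLipschitz.clarkeSubdiffStronglyMonotone_of_strongConvexOn
    (hh : LocallyLipschitz h) (hsc : StrongConvexOn univ (2 * ϑ) h) :
    ClarkeSubdiffStronglyMonotone h (2 * ϑ) := by
  intro u v ξ hξ η hη
  have hξ' := (hξ (v - u)).trans (hh.clarkeDeriv_le_of_strongConvexOn hsc u (v - u))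
  have hη' := (hη (u - v)).trans (hh.clarkeDeriv_le_of_strongConvexOn hsc v (u - v))
  rw [add_sub_cancel, norm_sub_rev] at hξ'
  rw [add_sub_cancel] at hη'
  rw [show ξ (u - v) = -ξ (v - u) by rw [← map_neg, neg_sub]]
  linarith

theorem LocallyLipschitz.clarkeDeriv_add_clarkeDeriv_le (hh : LocallyLipschitz h)
    (H : ClarkeSubdiffStronglyMonotone h (2 * ϑ)) (x y : X) :
    clarkeDeriv h x (y - x) + clarkeDeriv h y (x - y) ≤ -(2 * ϑ * ‖x - y‖ ^ 2) := by
  rcases eq_or_ne x y with rfl | hxy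
  · simp
  obtain ⟨ξ, hξ, hξd⟩ := hh.exists_mem_clarkeSubdiff_apply_eq x (sub_ne_zero.2 hxy.symm)
  obtain ⟨η, hη, hηd⟩ := hh.exists_mem_clarkeSubdiff_apply_eq y (sub_ne_zero.2 hxy)
  have := H x y ξ hξ η hη
  rw [← hξd, ← hηd, ← neg_sub x y, map_neg]
  linarith

theorem LocallyLipschitz.convexOn_line_sub_sq (hh : LocallyLipschitz h) (hϑ : 0 ≤ ϑ)
    (H : ClarkeSubdiffStronglyMonotone h (2 * ϑ)) (v d : X) :
    ConvexOn ℝ univ fun t : ℝ => h (v + t • d) - ϑ * ‖d‖ ^ 2 * t ^ 2 := by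
  set c := ϑ * ‖d‖ ^ 2
  have hc : 0 ≤ c := by positivity
  set p : ℝ → ℝ := fun t => clarkeDeriv h (v + t • d) d
  set q : ℝ → ℝ := fun t => clarkeDeriv h (v + t • d) (-d)
  have hpq : ∀ s t, s < t → p s + q t ≤ -(2 * c * (t - s)) := by
    intro s t hst
    have hts := sub_pos.2 hst
    have := hh.clarkeDeriv_add_clarkeDeriv_le H (v + s • d) (v + t • d)
    rw [show v + t • d - (v + s • d) = (t - s) • d by module,
      show v + s • d - (v + t • d) = (t - s) • -d by module, hh.clarkeDeriv_smul _ _ hts,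
      hh.clarkeDeriv_smul _ _ hts, norm_smul, norm_neg, Real.norm_of_nonneg hts.le] at this
    have : (t - s) * (p s + q t) ≤ (t - s) * -(2 * c * (t - s)) := by linarith
    exact le_of_mul_le_mul_left this hts
  have hcont := hh.continuous
  refine convexOn_univ_of_dini_bounds (g := fun τ => p τ - 2 * c * τ) (by fun_prop) ?_ ?_ ?_
  · intro s t hst
    rcases hst.eq_or_lt with rfl | hst
    · rfl
    linarith [hpq s t hst, hh.clarkeDeriv_add_neg_nonneg (v + t • d) d]
  · intro τ ρ hρ
    filter_upwards [hh.eventually_div_lt_of_clarkeDeriv_lt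
      (show p τ < ρ + 2 * c * τ by linarith), self_mem_nhdsWithin] with t ht (htpos : 0 < t)
    rw [show v + (τ + t) • d = v + τ • d + t • d by module]
    rw [div_lt_iff₀ htpos] at ht ⊢
    nlinarith [mul_nonneg hc (sq_nonneg t)]
  · intro s τ hsτ ρ hρ
    filter_upwards [hh.eventually_div_lt_of_clarkeDeriv_lt
      (show q τ < ρ - 2 * c * τ by linarith [hpq s τ hsτ]), self_mem_nhdsWithin]
      with t ht (htpos : 0 < t)
    rw [show v + (τ - t) • d = v + τ • d + t • -d by module]
    rw [div_lt_iff₀ htpos] at ht ⊢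
    nlinarith [mul_nonneg hc (sq_nonneg t)]

theorem LocallyLipschitz.strongConvexOn_of_clarkeSubdiffStronglyMonotone
    (hh : LocallyLipschitz h) (hϑ : 0 ≤ ϑ) (H : ClarkeSubdiffStronglyMonotone h (2 * ϑ)) :
    StrongConvexOn univ (2 * ϑ) h := by
  refine strongConvexOn_univ_two_mul_iff.2 fun u v l hl => ?_
  have := (hh.convexOn_line_sub_sq hϑ H v (u - v)).2 (mem_univ 1) (mem_univ 0) hl.1
    (sub_nonneg.2 hl.2) (add_sub_cancel l 1)
  simp only [smul_eq_mul, mul_one, mul_zero, add_zero, zero_smul, one_smul,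
    add_sub_cancel] at this
  rw [show l • u + (1 - l) • v = v + l • (u - v) by module]
  linarith

end StrongConvexity

theorem stmt5_general {X : Type*} [NormedAddCommGroup X] [NormedSpace ℝ X]
    (h : X → ℝ) (hh : LocallyLipschitz h) (ϑ : ℝ) (hϑ : 0 < ϑ) :
    (∀ u v : X, ∀ l : ℝ, l ∈ Set.Icc (0 : ℝ) 1 →
        h (l • u + (1 - l) • v) ≤ l * h u + (1 - l) * h v - ϑ * l * (1 - l) * ‖u - v‖ ^ 2) ↔
      (∀ u v : X, ∀ ξ ∈ clarkeSubdiff h u, ∀ η ∈ clarkeSubdiff h v,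
        ξ (u - v) - η (u - v) ≥ 2 * ϑ * ‖u - v‖ ^ 2) := by
  rw [← strongConvexOn_univ_two_mul_iff]
  exact ⟨hh.clarkeSubdiffStronglyMonotone_of_strongConvexOn,
    hh.strongConvexOn_of_clarkeSubdiffStronglyMonotone hϑ.le⟩

theorem stmt5 {X : Type*} [NormedAddCommGroup X] [NormedSpace ℝ X] [CompleteSpace X]
    (h : X → ℝ) (hh : LocallyLipschitz h) (ϑ : ℝ) (hϑ : 0 < ϑ) :
    (∀ u v : X, ∀ l : ℝ, l ∈ Set.Icc (0 : ℝ) 1 →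
        h (l • u + (1 - l) • v) ≤ l * h u + (1 - l) * h v - ϑ * l * (1 - l) * ‖u - v‖ ^ 2) ↔
      (∀ u v : X, ∀ ξ ∈ clarkeSubdiff h u, ∀ η ∈ clarkeSubdiff h v,
        ξ (u - v) - η (u - v) ≥ 2 * ϑ * ‖u - v‖ ^ 2) :=
  stmt5_general h hh ϑ hϑ
end

section
/- Let X be a Banach space and E : X → ℝ locally Lipschitz. Suppose there exist ρ > 0 and r ≥ 1 such that for all v₁, v₂ ∈ X and all ξ₁ ∈ ∂E(v₁), ξ₂ ∈ ∂E(v₂), ⟨ξ₁ − ξ₂, v₁ − v₂⟩ ≥ ρ(‖v₁ − v₂‖² + ‖v₁ − v₂‖^{r+1}). Then there exists a uniform ϑ > 0 such that for all v₁, v₂ ∈ X and every ξ ∈ ∂E(v₂), E(v₁) − E(v₂) ≥ ⟨ξ, v₁ − v₂⟩ + ϑ(‖v₁ − v₂‖² + ‖v₁ − v₂‖^{r+1}). -/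
open Filter Topology

namespace ClarkeAux

open Set Topology

variable {X : Type*} [NormedAddCommGroup X] [NormedSpace ℝ X]

/-- The difference quotient appearing in the Clarke derivative. -/
noncomputable def slopeFn (E : X → ℝ) (v : X) : X × ℝ → ℝ :=
  fun p => (E (p.1 + p.2 • v) - E p.1) / p.2

/-- The filter over which the limsup is taken. -/
def Phi (x : X) : Filter (X × ℝ) := (nhds x) ×ˢ (nhdsWithin 0 (Set.Ioi 0))

lemma clarkeDeriv_eq (E : X → ℝ) (x v : X) :
    clarkeDeriv E x v = limsup (slopeFn E v) (Phi x) := rfl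

instance (x : X) : (Phi x).NeBot := by
  have : (nhdsWithin (0:ℝ) (Set.Ioi 0)).NeBot := inferInstance
  exact Filter.prod_neBot.2 ⟨inferInstance, this⟩

section bdd

variable {γ : Type*} {f : Filter γ} {u : γ → ℝ} {M : ℝ}

lemma bdd_le (h : ∀ᶠ z in f, |u z| ≤ M) : IsBoundedUnder (· ≤ ·) f u :=
  ⟨M, eventually_map.2 (h.mono fun z hz => (abs_le.1 hz).2)⟩

lemma bdd_ge (h : ∀ᶠ z in f, |u z| ≤ M) : IsBoundedUnder (· ≥ ·) f u :=
  ⟨-M, eventually_map.2 (h.mono fun z hz => (abs_le.1 hz).1)⟩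

lemma cobdd_le [f.NeBot] (h : ∀ᶠ z in f, |u z| ≤ M) : IsCoboundedUnder (· ≤ ·) f u :=
  (bdd_ge h).isCoboundedUnder_le

lemma cobdd_ge [f.NeBot] (h : ∀ᶠ z in f, |u z| ≤ M) : IsCoboundedUnder (· ≥ ·) f u :=
  (bdd_le h).isCoboundedUnder_ge

end bdd

lemma limsup_comp {α γ : Type*} (u : α → ℝ) (m : γ → α) (f : Filter γ) :
    limsup (fun z => u (m z)) f = limsup u (map m f) := by
  simp only [Filter.limsup, Filter.map_map]
  rfl

lemma exists_bound (E : X → ℝ) (hE : LocallyLipschitz E) (x : X) :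
    ∃ K : ℝ, 0 ≤ K ∧ ∀ v : X, ∀ᶠ p in Phi x, |slopeFn E v p| ≤ K * ‖v‖ := by
  obtain ⟨K, s, hs, hK⟩ := hE x
  obtain ⟨ε, hε, hball⟩ := Metric.mem_nhds_iff.1 hs
  refine ⟨K, K.coe_nonneg, fun v => ?_⟩
  have h1 : ∀ᶠ y in 𝓝 x, y ∈ Metric.ball x (ε / 2) :=
    Filter.mem_of_superset (Metric.ball_mem_nhds x (by positivity)) fun y hy => hy
  set δ := ε / (2 * (‖v‖ + 1)) with hδdef
  have hδ : 0 < δ := by positivity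
  have h2 : ∀ᶠ t in 𝓝[>] (0:ℝ), t ∈ Ioo 0 δ :=
    Filter.mem_of_superset (Ioo_mem_nhdsGT_of_mem ⟨le_refl 0, hδ⟩) fun t ht => ht
  filter_upwards [h1.prod_mk h2]
  rintro ⟨y, t⟩ ⟨hy, ht⟩
  have ht0 : 0 < t := ht.1
  have hδv : δ * (‖v‖ + 1) = ε / 2 := by
    rw [hδdef, div_mul_eq_mul_div, mul_comm 2 (‖v‖ + 1), ← div_div,
      mul_div_assoc, div_self (by positivity), mul_one]
  have htv : t * ‖v‖ < ε / 2 := by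
    nlinarith [ht.2, norm_nonneg v, ht0]
  have hmem1 : y ∈ Metric.ball x ε := by
    have := Metric.mem_ball.1 hy
    exact Metric.mem_ball.2 (by linarith)
  have hdist : dist (y + t • v) y = t * ‖v‖ := by
    simp [dist_eq_norm, norm_smul, abs_of_pos ht0]
  have hmem2 : y + t • v ∈ Metric.ball x ε := by
    have h3 : dist (y + t • v) x ≤ dist (y + t • v) y + dist y x := dist_triangle _ _ _
    have h4 := Metric.mem_ball.1 hy
    exact Metric.mem_ball.2 (by rw [hdist] at h3; linarith)
  have hL : dist (E (y + t • v)) (E y) ≤ K * dist (y + t • v) y :=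
    hK.dist_le_mul _ (hball hmem2) _ (hball hmem1)
  rw [Real.dist_eq, hdist] at hL
  have : |slopeFn E v (y, t)| = |E (y + t • v) - E y| / t := by
    rw [slopeFn, abs_div, abs_of_pos ht0]
  rw [this, div_le_iff₀ ht0]
  calc |E (y + t • v) - E y| ≤ K * (t * ‖v‖) := hL
    _ = K * ‖v‖ * t := by ring

lemma clarkeDeriv_le_bound (E : X → ℝ) (hE : LocallyLipschitz E) (x : X) :
    ∃ K : ℝ, 0 ≤ K ∧ ∀ v : X, clarkeDeriv E x v ≤ K * ‖v‖ := by
  obtain ⟨K, hK0, hKb⟩ := exists_bound E hE x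
  refine ⟨K, hK0, fun v => ?_⟩
  rw [clarkeDeriv_eq]
  exact limsup_le_of_le (cobdd_le (hKb v))
    ((hKb v).mono fun p hp => (abs_le.1 hp).2)

lemma clarkeDeriv_zero (E : X → ℝ) (x : X) : clarkeDeriv E x 0 = 0 := by
  have h : slopeFn E (0 : X) = fun _ => (0 : ℝ) := by
    funext p; simp [slopeFn]
  rw [clarkeDeriv_eq, h, limsup_const]

lemma clarkeDeriv_smul (E : X → ℝ) (hE : LocallyLipschitz E) (x v : X) {c : ℝ} (hc : 0 < c) :
    clarkeDeriv E x (c • v) = c * clarkeDeriv E x v := by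
  obtain ⟨K, hK0, hKb⟩ := exists_bound E hE x
  set m : X × ℝ → X × ℝ := fun p => (p.1, c * p.2) with hm_def
  have hsnd : ∀ c' : ℝ, 0 < c' →
      Tendsto (fun p : X × ℝ => (p.1, c' * p.2)) (Phi x) (Phi x) := by
    intro c' hc'
    refine Tendsto.prodMk tendsto_fst ?_
    apply tendsto_nhdsWithin_of_tendsto_nhds_of_eventually_within
    · have : Tendsto (fun p : X × ℝ => p.2) (Phi x) (𝓝 0) :=
        tendsto_snd.mono_right nhdsWithin_le_nhds
      simpa using this.const_mul c'
    · have hI : ∀ᶠ t in 𝓝[>] (0:ℝ), t ∈ Ioi (0:ℝ) := self_mem_nhdsWithin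
      have hsnd2 : ∀ᶠ p : X × ℝ in Phi x, p.2 ∈ Ioi (0:ℝ) :=
        (Filter.Eventually.prod_mk (Filter.Eventually.of_forall
          (fun _ : X => True.intro)) hI).mono fun p hp => hp.2
      exact hsnd2.mono fun p hp => mul_pos hc' hp
  have hm1 : Tendsto m (Phi x) (Phi x) := hsnd c hc
  have hm2 : Tendsto (fun p : X × ℝ => (p.1, c⁻¹ * p.2)) (Phi x) (Phi x) :=
    hsnd c⁻¹ (inv_pos.2 hc)
  have hmap : map m (Phi x) = Phi x := by
    refine le_antisymm hm1 ?_
    have hcomp : m ∘ (fun p : X × ℝ => (p.1, c⁻¹ * p.2)) = id := by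
      funext p
      simp [hm_def, mul_inv_cancel_left₀ hc.ne']
    calc Phi x = map (m ∘ fun p : X × ℝ => (p.1, c⁻¹ * p.2)) (Phi x) := by
          rw [hcomp, Filter.map_id]
      _ = map m (map (fun p : X × ℝ => (p.1, c⁻¹ * p.2)) (Phi x)) := by
          rw [Filter.map_map]
      _ ≤ map m (Phi x) := map_mono hm2
  have key : slopeFn E (c • v) = fun p => c * slopeFn E v (m p) := by
    funext p
    simp only [slopeFn, hm_def]
    rw [show p.2 • (c • v) = (c * p.2) • v by rw [smul_smul, mul_comm]]
    rw [mul_div_assoc' c _ _, mul_div_mul_left _ _ hc.ne']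
  rw [clarkeDeriv_eq, clarkeDeriv_eq, key]
  have h1 : limsup (fun p => c * slopeFn E v (m p)) (Phi x)
      = limsup (fun p => c * slopeFn E v p) (map m (Phi x)) :=
    limsup_comp (fun p => c * slopeFn E v p) m (Phi x)
  rw [h1, hmap]
  have habs : ∀ᶠ p in Phi x, |c * slopeFn E v p| ≤ c * (K * ‖v‖) := by
    filter_upwards [hKb v] with p hp
    rw [abs_mul, abs_of_pos hc]
    exact mul_le_mul_of_nonneg_left hp hc.le
  have := OrderIso.limsup_apply (f := Phi x) (u := slopeFn E v) (OrderIso.mulLeft₀ c hc)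
    (bdd_le (hKb v)) (cobdd_le (hKb v)) ?_ ?_
  · simp only [OrderIso.mulLeft₀_apply] at this
    exact this.symm
  · simpa using bdd_le habs
  · simpa using cobdd_le habs

lemma clarkeDeriv_add_le (E : X → ℝ) (hE : LocallyLipschitz E) (x u v : X) :
    clarkeDeriv E x (u + v) ≤ clarkeDeriv E x u + clarkeDeriv E x v := by
  obtain ⟨K, hK0, hKb⟩ := exists_bound E hE x
  set m : X × ℝ → X × ℝ := fun p => (p.1 + p.2 • v, p.2) with hm_def
  have hm : Tendsto m (Phi x) (Phi x) := by
    refine Tendsto.prodMk ?_ tendsto_snd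
    have h2 : Tendsto (fun p : X × ℝ => p.2) (Phi x) (𝓝 0) :=
      tendsto_snd.mono_right nhdsWithin_le_nhds
    have h3 : Tendsto (fun p : X × ℝ => p.2 • v) (Phi x) (𝓝 ((0:ℝ) • v)) :=
      h2.smul_const v
    rw [zero_smul] at h3
    simpa [Phi] using tendsto_fst.add h3
  have key : slopeFn E (u + v) = fun p => slopeFn E u (m p) + slopeFn E v p := by
    funext p
    simp only [slopeFn, hm_def]
    rw [← add_div, show p.1 + p.2 • v + p.2 • u = p.1 + p.2 • (u + v) by
      rw [smul_add, add_comm (p.2 • u) (p.2 • v), ← add_assoc]]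
    ring
  have hbu : ∀ᶠ p in Phi x, |slopeFn E u (m p)| ≤ K * ‖u‖ := hm.eventually (hKb u)
  have hcob : IsCoboundedUnder (· ≤ ·) (map m (Phi x)) (slopeFn E u) := by
    rw [IsCoboundedUnder, Filter.map_map]
    exact cobdd_le hbu
  rw [clarkeDeriv_eq, clarkeDeriv_eq, clarkeDeriv_eq, key]
  have hadd := limsup_add_le (f := Phi x) (u := fun p => slopeFn E u (m p))
    (v := slopeFn E v) (bdd_ge hbu) (bdd_le hbu) (cobdd_le (hKb v)) (bdd_le (hKb v))
  have heq : (fun p => slopeFn E u (m p) + slopeFn E v p)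
      = (fun p => slopeFn E u (m p)) + slopeFn E v := rfl
  rw [heq]
  refine hadd.trans (add_le_add ?_ le_rfl)
  rw [limsup_comp (slopeFn E u) m (Phi x)]
  exact limsup_le_limsup_of_le hm hcob (bdd_le (hKb u))

/-- Hahn–Banach: there is an element of the Clarke subdifferential attaining the
Clarke derivative in a given nonzero direction. -/
lemma exists_subdiff_eq (E : X → ℝ) (hE : LocallyLipschitz E) (x : X) (u : X) (hu : u ≠ 0) :
    ∃ ζ : X →L[ℝ] ℝ, ζ ∈ clarkeSubdiff E x ∧ ζ u = clarkeDeriv E x u := by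
  set N : X → ℝ := clarkeDeriv E x with hN
  have N_hom : ∀ c : ℝ, 0 < c → ∀ v : X, N (c • v) = c * N v :=
    fun c hc v => clarkeDeriv_smul E hE x v hc
  have N_add : ∀ v w : X, N (v + w) ≤ N v + N w :=
    fun v w => clarkeDeriv_add_le E hE x v w
  have N_zero : N 0 = 0 := clarkeDeriv_zero E x
  have hNsum : 0 ≤ N u + N (-u) := by
    have := N_add u (-u)
    rw [add_neg_cancel, N_zero] at this
    linarith
  set f : X →ₗ.[ℝ] ℝ := LinearPMap.mkSpanSingleton u (N u) hu with hf_def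
  have hf : ∀ z : f.domain, f z ≤ N z := by
    rintro ⟨z, hz⟩
    obtain ⟨c, rfl⟩ := Submodule.mem_span_singleton.1 hz
    have happ : f ⟨c • u, hz⟩ = c * N u :=
      (LinearPMap.mkSpanSingleton'_apply u (N u) _ c hz).trans (smul_eq_mul _ _)
    rw [happ]
    rcases lt_trichotomy c 0 with h | h | h
    · have hcu : c • u = (-c) • (-u) := by simp
      have h1 : N (c • u) = (-c) * N (-u) := by
        rw [hcu]; exact N_hom (-c) (by linarith) (-u)
      rw [show ((⟨c • u, hz⟩ : f.domain) : X) = c • u from rfl, h1]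
      nlinarith
    · subst h
      rw [show ((⟨(0:ℝ) • u, hz⟩ : f.domain) : X) = (0:ℝ) • u from rfl, zero_smul, N_zero]
      simp
    · rw [show ((⟨c • u, hz⟩ : f.domain) : X) = c • u from rfl, N_hom c h u]
  obtain ⟨g, hgf, hgN⟩ := exists_extension_of_le_sublinear f N N_hom N_add hf
  obtain ⟨K, hK0, hKle⟩ := clarkeDeriv_le_bound E hE x
  have hgb : ∀ v : X, ‖g v‖ ≤ K * ‖v‖ := by
    intro v
    rw [Real.norm_eq_abs, abs_le]
    constructor
    · have h1 : g (-v) ≤ N (-v) := hgN (-v)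
      have h2 : N (-v) ≤ K * ‖v‖ := by simpa using hKle (-v)
      rw [map_neg] at h1
      linarith
    · exact (hgN v).trans (hKle v)
  refine ⟨g.mkContinuous K hgb, fun v => ?_, ?_⟩
  · simpa using hgN v
  · have hmem : u ∈ Submodule.span ℝ {u} := Submodule.mem_span_singleton_self u
    have := hgf ⟨u, hmem⟩
    rw [LinearPMap.mkSpanSingleton_apply ℝ ℝ hu (N u)] at this
    simpa using this

end ClarkeAux

open ClarkeAux Set

theorem stmt6 {X : Type*} [NormedAddCommGroup X] [NormedSpace ℝ X] [CompleteSpace X]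
    (E : X → ℝ) (hE : LocallyLipschitz E) (ρ r : ℝ) (hρ : 0 < ρ) (hr : 1 ≤ r)
    (hmono : ∀ v₁ v₂ : X, ∀ ξ₁ ∈ clarkeSubdiff E v₁, ∀ ξ₂ ∈ clarkeSubdiff E v₂,
      ξ₁ (v₁ - v₂) - ξ₂ (v₁ - v₂) ≥ ρ * (‖v₁ - v₂‖ ^ 2 + ‖v₁ - v₂‖ ^ (r + 1))) :
    ∃ ϑ : ℝ, 0 < ϑ ∧ ∀ v₁ v₂ : X, ∀ ξ ∈ clarkeSubdiff E v₂,
      E v₁ - E v₂ ≥ ξ (v₁ - v₂) + ϑ * (‖v₁ - v₂‖ ^ 2 + ‖v₁ - v₂‖ ^ (r + 1)) := by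
  have hr1 : (0:ℝ) < r + 1 := by linarith
  refine ⟨ρ / (r + 1), div_pos hρ hr1, fun v₁ v₂ ξ hξ => ?_⟩
  by_cases hveq : v₁ = v₂
  · subst hveq
    simp [Real.zero_rpow hr1.ne']
  set d := v₁ - v₂ with hd_def
  have hd : d ≠ 0 := sub_ne_zero.2 hveq
  have hEc : Continuous E := hE.continuous
  -- key derivative bound along the segment
  have key : ∀ t : ℝ, 0 < t →
      clarkeDeriv E (v₂ + t • d) (-d) ≤ -(ξ d) - ρ * (‖d‖ ^ 2 * t + ‖d‖ ^ (r + 1) * t ^ r) := by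
    intro t ht
    obtain ⟨η, hη, hηd⟩ := exists_subdiff_eq E hE (v₂ + t • d) (-d) (neg_ne_zero.2 hd)
    have hmono' := hmono (v₂ + t • d) v₂ η hη ξ hξ
    rw [add_sub_cancel_left] at hmono'
    have hnorm : ‖t • d‖ = t * ‖d‖ := by rw [norm_smul, Real.norm_eq_abs, abs_of_pos ht]
    have hpow2 : ‖t • d‖ ^ 2 = t ^ 2 * ‖d‖ ^ 2 := by rw [hnorm, mul_pow]
    have hpowr : ‖t • d‖ ^ (r + 1) = t ^ (r + 1) * ‖d‖ ^ (r + 1) := by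
      rw [hnorm, Real.mul_rpow ht.le (norm_nonneg d)]
    have htr : t ^ (r + 1) = t ^ r * t := by
      rw [Real.rpow_add ht, Real.rpow_one]
    have hη_lin : η (t • d) = t * η d := by rw [map_smul]; rfl
    have hξ_lin : ξ (t • d) = t * ξ d := by rw [map_smul]; rfl
    rw [hpow2, hpowr, hη_lin, hξ_lin, htr] at hmono'
    have hdiv : η d - ξ d ≥ ρ * (t * ‖d‖ ^ 2 + t ^ r * ‖d‖ ^ (r + 1)) := by
      have h2 : t * (η d - ξ d) ≥ t * (ρ * (t * ‖d‖ ^ 2 + t ^ r * ‖d‖ ^ (r + 1))) := by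
        nlinarith [hmono']
      exact le_of_mul_le_mul_left h2 ht
    have : clarkeDeriv E (v₂ + t • d) (-d) = -(η d) := by
      rw [← hηd, map_neg]
    rw [this]
    nlinarith [hdiv]
  -- the auxiliary real functions
  set G : ℝ → ℝ := fun t => -E (v₂ + t • d) with hG_def
  set B : ℝ → ℝ := fun t =>
    -(ξ d) * t - ρ * (‖d‖ ^ 2 * (t ^ 2 / 2) + ‖d‖ ^ (r + 1) * (t ^ (r + 1) / (r + 1)))
    with hB_def
  set B' : ℝ → ℝ := fun t => -(ξ d) - ρ * (‖d‖ ^ 2 * t + ‖d‖ ^ (r + 1) * t ^ r) with hB'_def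
  have hGcont : Continuous G := by
    apply Continuous.neg
    exact hEc.comp (continuous_const.add (continuous_id.smul continuous_const))
  have hBderiv : ∀ t : ℝ, t ≠ 0 → HasDerivAt B (B' t) t := by
    intro t ht
    have h1 : HasDerivAt (fun s : ℝ => s ^ (r + 1)) ((r + 1) * t ^ r) t := by
      have := Real.hasDerivAt_rpow_const (x := t) (p := r + 1) (Or.inl ht)
      simpa [add_sub_cancel_right] using this
    have h2 : HasDerivAt (fun s : ℝ => s ^ 2) (2 * t) t := by
      simpa using hasDerivAt_pow 2 t
    have h3 : HasDerivAt B
        (-(ξ d) * 1 - ρ * (‖d‖ ^ 2 * ((2 * t) / 2) + ‖d‖ ^ (r + 1) * (((r + 1) * t ^ r) / (r + 1)))) t := by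
      exact ((hasDerivAt_id t).const_mul (-(ξ d))).sub
        ((((h2.div_const 2).const_mul (‖d‖ ^ 2)).add
          ((h1.div_const (r + 1)).const_mul (‖d‖ ^ (r + 1)))).const_mul ρ)
    have heq : -(ξ d) * 1 - ρ * (‖d‖ ^ 2 * ((2 * t) / 2) + ‖d‖ ^ (r + 1) * (((r + 1) * t ^ r) / (r + 1)))
        = B' t := by
      rw [hB'_def]
      field_simp
    rw [heq] at h3
    exact h3
  have hBcontAt : ∀ t : ℝ, ContinuousAt B t := by
    intro t
    have h1 : ContinuousAt (fun s : ℝ => s ^ (r + 1)) t :=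
      Real.continuousAt_rpow_const t (r + 1) (Or.inr hr1.le)
    exact ((continuousAt_const.mul continuousAt_id).sub
      (continuousAt_const.mul ((continuousAt_const.mul
        ((continuousAt_pow t 2).div_const 2)).add
        (continuousAt_const.mul (h1.div_const (r + 1))))))
  -- the Gronwall-type estimate on [ε, 1]
  have main : ∀ ε : ℝ, 0 < ε → ε ≤ 1 → G 1 ≤ G ε + (B 1 - B ε) := by
    intro ε hε hε1
    have himg := image_le_of_liminf_slope_right_le_deriv_boundary
      (f := G) (a := ε) (b := 1) (B := fun t => G ε + (B t - B ε)) (B' := B')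
      (hGcont.continuousOn) (by simp)
      (continuous_const.add ((continuous_iff_continuousAt.2 hBcontAt).sub
        continuous_const)).continuousOn
      (fun x hx => (((hBderiv x (lt_of_lt_of_le hε hx.1).ne').hasDerivWithinAt.sub_const
        (B ε)).const_add (G ε)))
      ?_
    · have := himg (right_mem_Icc.2 hε1)
      simpa using this
    · intro x hx q hq
      have hx0 : 0 < x := lt_of_lt_of_le hε hx.1
      set w : X := v₂ + x • d with hw_def
      have hcd : clarkeDeriv E w (-d) ≤ B' x := key x hx0
      obtain ⟨K, hK0, hKb⟩ := exists_bound E hE w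
      have hlim : limsup (slopeFn E (-d)) (Phi w) < q := by
        rw [← clarkeDeriv_eq]
        exact lt_of_le_of_lt hcd hq
      have hev : ∀ᶠ p in Phi w, slopeFn E (-d) p < q :=
        eventually_lt_of_limsup_lt hlim (bdd_le (hKb (-d)))
      set ψ : ℝ → X × ℝ := fun z => (v₂ + z • d, z - x) with hψ_def
      have hψ : Tendsto ψ (𝓝[>] x) (Phi w) := by
        refine Tendsto.prodMk ?_ ?_
        · exact ((continuous_const.add (continuous_id.smul
            continuous_const)).tendsto x).mono_left nhdsWithin_le_nhds
        · apply tendsto_nhdsWithin_of_tendsto_nhds_of_eventually_within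
          · have : Tendsto (fun z : ℝ => z - x) (𝓝 x) (𝓝 (x - x)) :=
              (continuous_id.sub continuous_const).tendsto x
            rw [sub_self] at this
            exact this.mono_left nhdsWithin_le_nhds
          · filter_upwards [self_mem_nhdsWithin] with z hz
            exact sub_pos.2 (Set.mem_Ioi.1 hz)
      have hev2 : ∀ᶠ z in 𝓝[>] x, slopeFn E (-d) (ψ z) < q := hψ.eventually hev
      have hslope : ∀ᶠ z in 𝓝[>] x, slope G x z < q := by
        filter_upwards [hev2, self_mem_nhdsWithin] with z hz hzx
        have hzx' : (0:ℝ) < z - x := sub_pos.2 hzx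
        have hpt : v₂ + z • d + (z - x) • (-d) = v₂ + x • d := by
          rw [smul_neg, ← sub_eq_add_neg, add_sub_assoc, ← sub_smul, sub_sub_cancel]
        have : slopeFn E (-d) (ψ z) = slope G x z := by
          rw [hψ_def]
          simp only [slopeFn]
          rw [hpt, slope_def_field, hG_def]
          simp only
          rw [div_eq_div_iff (by exact hzx'.ne') ?_]
          · ring
          · intro h
            exact hzx'.ne' (by linarith [sub_eq_zero.1 (by linarith [h] : x - z = 0)])
        rwa [this] at hz
      exact hslope.frequently
  -- pass to the limit ε → 0⁺
  have hlim0 : Tendsto (fun ε : ℝ => G ε + (B 1 - B ε)) (𝓝[>] (0:ℝ))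
      (𝓝 (G 0 + (B 1 - B 0))) := by
    have : Tendsto (fun ε : ℝ => G ε + (B 1 - B ε)) (𝓝 (0:ℝ)) (𝓝 (G 0 + (B 1 - B 0))) :=
      (hGcont.tendsto 0).add (tendsto_const_nhds.sub (hBcontAt 0))
    exact this.mono_left nhdsWithin_le_nhds
  have hev3 : ∀ᶠ ε in 𝓝[>] (0:ℝ), G 1 ≤ G ε + (B 1 - B ε) := by
    filter_upwards [Ioc_mem_nhdsGT_of_mem (Set.mem_Ico.2 ⟨le_refl (0:ℝ), one_pos⟩)] with ε hε
    exact main ε hε.1 hε.2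
  have final : G 1 ≤ G 0 + (B 1 - B 0) := ge_of_tendsto hlim0 hev3
  -- unfold everything
  have hG1 : G 1 = -E v₁ := by
    rw [hG_def]
    simp only [one_smul]
    rw [hd_def, add_sub_cancel]
  have hG0 : G 0 = -E v₂ := by
    rw [hG_def]; simp
  have hB0 : B 0 = 0 := by
    rw [hB_def]
    simp [Real.zero_rpow hr1.ne']
  have hB1 : B 1 = -(ξ d) - ρ * (‖d‖ ^ 2 / 2 + ‖d‖ ^ (r + 1) / (r + 1)) := by
    rw [hB_def]
    simp only [Real.one_rpow, one_pow, mul_one]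
    ring
  rw [hG1, hG0, hB0, hB1] at final
  have ha : (0:ℝ) ≤ ‖d‖ ^ 2 := by positivity
  have hb : (0:ℝ) ≤ ‖d‖ ^ (r + 1) := Real.rpow_nonneg (norm_nonneg d) _
  have hfrac : ρ / (r + 1) * (‖d‖ ^ 2 + ‖d‖ ^ (r + 1))
      ≤ ρ * (‖d‖ ^ 2 / 2 + ‖d‖ ^ (r + 1) / (r + 1)) := by
    have h2 : ρ * ‖d‖ ^ 2 / (r + 1) ≤ ρ * ‖d‖ ^ 2 / 2 :=
      div_le_div_of_nonneg_left (by positivity) (by norm_num) (by linarith)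
    have hexp : ρ / (r + 1) * (‖d‖ ^ 2 + ‖d‖ ^ (r + 1))
        = ρ * ‖d‖ ^ 2 / (r + 1) + ρ * ‖d‖ ^ (r + 1) / (r + 1) := by ring
    have hexp2 : ρ * (‖d‖ ^ 2 / 2 + ‖d‖ ^ (r + 1) / (r + 1))
        = ρ * ‖d‖ ^ 2 / 2 + ρ * ‖d‖ ^ (r + 1) / (r + 1) := by ring
    rw [hexp, hexp2]
    linarith
  have : E v₁ - E v₂ ≥ ξ d + ρ * (‖d‖ ^ 2 / 2 + ‖d‖ ^ (r + 1) / (r + 1)) := by linarith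
  calc E v₁ - E v₂ ≥ ξ d + ρ * (‖d‖ ^ 2 / 2 + ‖d‖ ^ (r + 1) / (r + 1)) := this
    _ ≥ ξ d + ρ / (r + 1) * (‖d‖ ^ 2 + ‖d‖ ^ (r + 1)) := by linarith
end
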